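/- arXiv:1103.3723 — 4 statements merged into one kernel-verified Lean document; each statement's English description precedes it below -/
import Mathlib

section
/- Let S, T ⊆ ℕ² be nonempty sets. Suppose that for every pair (m, n) of coprime positive integers, min{ m·i + n·j : (i,j) ∈ S } = min{ m·i + n·j : (i,j) ∈ T }. Then the Newton diagrams coincide: Δ(S) = Δ(T). -/
/-- The closed first quadrant `ℝ₊² = [0,∞)²` of `ℝ²`. -/
def firstQuadrant : Set (ℝ × ℝ) := {p | 0 ≤ p.1 ∧ 0 ≤ p.2}

/-- The Newton diagram of a set `S ⊆ ℝ²`: the convex hull of the union of the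
translates `s + ℝ₊²` over `s ∈ S`. -/
noncomputable def newtonDiagram (S : Set (ℝ × ℝ)) : Set (ℝ × ℝ) :=
  convexHull ℝ (⋃ s ∈ S, (fun q => s + q) '' firstQuadrant)

/-- The natural embedding `ℕ² ↪ ℝ²`. -/
def natEmbed (p : ℕ × ℕ) : ℝ × ℝ := ((p.1 : ℝ), (p.2 : ℝ))

/-!
Outside points of the Newton diagram `Δ(S)` are separated from it by Hahn–Banach. Since `Δ(S)` is
closed (by Dickson's lemma `S` has finitely many minimal points), convex and an upper set, the
separating weight can be taken nonnegative, then positive rational, then a coprime pair `(m, n)`.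
So `Δ(S)` is the intersection of the half-planes `m * x + n * y ≥ min_S (m * i + n * j)` over
coprime `(m, n)`, which only depends on these minima.
-/

open Set Pointwise

lemma firstQuadrant_eq_Ici : firstQuadrant = Ici 0 := by
  ext p
  simp [firstQuadrant, Prod.le_def]

lemma newtonDiagram_eq_convexHull_add (P : Set (ℝ × ℝ)) :
    newtonDiagram P = convexHull ℝ P + Ici 0 := by
  rw [newtonDiagram, firstQuadrant_eq_Ici, iUnion_add_left_image, convexHull_add,
    (convex_Ici 0).convexHull_eq]

lemma convex_newtonDiagram (P : Set (ℝ × ℝ)) : Convex ℝ (newtonDiagram P) :=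
  convex_convexHull ℝ _

lemma isUpperSet_newtonDiagram (P : Set (ℝ × ℝ)) : IsUpperSet (newtonDiagram P) := by
  rw [newtonDiagram_eq_convexHull_add]
  exact (isUpperSet_Ici 0).add_left

lemma subset_newtonDiagram (P : Set (ℝ × ℝ)) : P ⊆ newtonDiagram P := by
  rw [newtonDiagram_eq_convexHull_add]
  exact (subset_convexHull ℝ P).trans (subset_add_left _ self_mem_Ici)

lemma newtonDiagram_subset {P C : Set (ℝ × ℝ)} (hC : Convex ℝ C) (hCup : IsUpperSet C)
    (hPC : P ⊆ C) : newtonDiagram P ⊆ C := by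
  rw [newtonDiagram_eq_convexHull_add]
  rintro _ ⟨x, hx, q, hq, rfl⟩
  exact hCup (le_add_of_nonneg_right hq) (convexHull_min hPC hC hx)

lemma newtonDiagram_subset_newtonDiagram {P P' : Set (ℝ × ℝ)} (h : ∀ x ∈ P, ∃ y ∈ P', y ≤ x) :
    newtonDiagram P ⊆ newtonDiagram P' := by
  refine newtonDiagram_subset (convex_newtonDiagram P') (isUpperSet_newtonDiagram P') ?_
  intro x hx
  obtain ⟨y, hy, hyx⟩ := h x hx
  exact isUpperSet_newtonDiagram P' hyx (subset_newtonDiagram P' hy)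

lemma isClosed_newtonDiagram {P : Set (ℝ × ℝ)} (hP : P.Finite) : IsClosed (newtonDiagram P) := by
  rw [newtonDiagram_eq_convexHull_add]
  exact isClosed_Ici.add_left_of_isCompact (hP.isCompact_convexHull ℝ)

lemma natEmbed_mono : Monotone natEmbed :=
  fun _ _ h => Prod.mk_le_mk.2 ⟨Nat.cast_le.2 h.1, Nat.cast_le.2 h.2⟩

lemma natEmbed_nonneg (s : ℕ × ℕ) : 0 ≤ natEmbed s :=
  Prod.mk_le_mk.2 ⟨Nat.cast_nonneg _, Nat.cast_nonneg _⟩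

lemma newtonDiagram_natEmbed_minimal (S : Set (ℕ × ℕ)) :
    newtonDiagram (natEmbed '' {s | Minimal (· ∈ S) s}) = newtonDiagram (natEmbed '' S) := by
  refine (newtonDiagram_subset_newtonDiagram ?_).antisymm (newtonDiagram_subset_newtonDiagram ?_)
  · rintro _ ⟨s, hs, rfl⟩
    exact ⟨natEmbed s, mem_image_of_mem _ hs.prop, le_rfl⟩
  · rintro _ ⟨s, hs, rfl⟩
    obtain ⟨f, hfs, hf⟩ := exists_minimal_le_of_wellFoundedLT (· ∈ S) s hs
    exact ⟨natEmbed f, mem_image_of_mem _ hf, natEmbed_mono hfs⟩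

/-- By Dickson's lemma the minimal points of `S` form a finite antichain. -/
lemma isClosed_newtonDiagram_natEmbed (S : Set (ℕ × ℕ)) :
    IsClosed (newtonDiagram (natEmbed '' S)) := by
  rw [← newtonDiagram_natEmbed_minimal]
  exact isClosed_newtonDiagram
    ((WellQuasiOrderedLE.finite_of_isAntichain (setOfPred_minimal_antichain _)).image _)

lemma apply_eq_fst_mul_add_snd_mul {R F : Type*} [Semiring R] [FunLike F (R × R) R]
    [LinearMapClass F R (R × R) R] (f : F) (x : R × R) :
    f x = x.1 * f (1, 0) + x.2 * f (0, 1) := by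
  conv_lhs => rw [show x = x.1 • ((1 : R), (0 : R)) + x.2 • ((0 : R), (1 : R)) by ext <;> simp]
  rw [map_add, map_smul, map_smul, smul_eq_mul, smul_eq_mul]

lemma nonneg_of_forall_lt_add_mul {x y u : ℝ} (h : ∀ t : ℝ, 0 ≤ t → u < x + t * y) : 0 ≤ y := by
  by_contra! hy
  have hux : u < x := by simpa using h 0 le_rfl
  have := h ((x - u) / -y) (div_nonneg (by linarith) (by linarith))
  rw [div_mul_eq_mul_div, div_neg, mul_div_cancel_right₀ _ hy.ne] at this
  linarith

/-- Hahn–Banach; the weight is nonnegative because `C` contains a ray in each direction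
`(1, 0)` and `(0, 1)`. -/
lemma exists_nonneg_weight_separating {C : Set (ℝ × ℝ)} (hconv : Convex ℝ C)
    (hclosed : IsClosed C) (hup : IsUpperSet C) (hne : C.Nonempty) {p : ℝ × ℝ} (hp : p ∉ C) :
    ∃ a b u : ℝ, 0 ≤ a ∧ 0 ≤ b ∧ a * p.1 + b * p.2 < u ∧ ∀ c ∈ C, u < a * c.1 + b * c.2 := by
  obtain ⟨f, u, hfp, hfC⟩ := geometric_hahn_banach_point_closed hconv hclosed hp
  set a := f (1, 0)
  set b := f (0, 1)
  replace hfC (c : ℝ × ℝ) (hc : c ∈ C) : u < a * c.1 + b * c.2 := by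
    linarith [apply_eq_fst_mul_add_snd_mul f c, hfC c hc]
  obtain ⟨c, hc⟩ := hne
  have ha : 0 ≤ a := nonneg_of_forall_lt_add_mul (u := u) (x := a * c.1 + b * c.2) fun t ht => by
    have := hfC (c + (t, 0)) (hup (le_add_of_nonneg_right ⟨ht, le_rfl⟩) hc)
    simp only [Prod.fst_add, Prod.snd_add, add_zero] at this
    linarith
  have hb : 0 ≤ b := nonneg_of_forall_lt_add_mul (u := u) (x := a * c.1 + b * c.2) fun t ht => by
    have := hfC (c + (0, t)) (hup (le_add_of_nonneg_right ⟨le_rfl, ht⟩) hc)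
    simp only [Prod.fst_add, Prod.snd_add, add_zero] at this
    linarith
  exact ⟨a, b, u, ha, hb, by linarith [apply_eq_fst_mul_add_snd_mul f p], hfC⟩

lemma exists_rat_gt_of_continuousAt {f : ℝ → ℝ} {a u : ℝ} (hf : ContinuousAt f a)
    (h : f a < u) : ∃ q : ℚ, a < q ∧ f q < u := by
  obtain ⟨ε, hε, hball⟩ := Metric.eventually_nhds_iff.mp (hf.eventually_lt continuousAt_const h)
  obtain ⟨q, haq, hqa⟩ := exists_rat_btwn (lt_add_of_pos_right a hε)
  exact ⟨q, haq, hball (by rw [Real.dist_eq, abs_lt]; constructor <;> linarith)⟩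

lemma exists_coprime_eq_mul {q₁ q₂ : ℚ} (h₁ : 0 < q₁) (h₂ : 0 < q₂) :
    ∃ m n : ℕ, 0 < m ∧ 0 < n ∧ m.Coprime n ∧
      ∃ c : ℚ, 0 < c ∧ (m : ℚ) = c * q₁ ∧ (n : ℚ) = c * q₂ := by
  set r := q₁ / q₂
  have hr : 0 < r := div_pos h₁ h₂
  have hnum : ((r.num.natAbs : ℕ) : ℚ) = r.num := by
    rw [Nat.cast_natAbs, Int.cast_abs, abs_of_pos (Int.cast_pos.2 (Rat.num_pos.2 hr))]
  refine ⟨r.num.natAbs, r.den, Int.natAbs_pos.2 (Rat.num_pos.2 hr).ne', r.pos, r.reduced,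
    r.den / q₂, div_pos (Nat.cast_pos.2 r.pos) h₂, ?_, by field_simp⟩
  rw [hnum, ← Rat.mul_den_eq_num]
  ring

/-- Raise the weight slightly to a positive rational one, which only increases it on `0 ≤ x`,
then clear denominators. -/
lemma exists_coprime_weight_of_nonneg_weight {a b u : ℝ} (ha : 0 ≤ a) (hb : 0 ≤ b) {p : ℝ × ℝ}
    (hp : a * p.1 + b * p.2 < u) :
    ∃ m n : ℕ, 0 < m ∧ 0 < n ∧ m.Coprime n ∧ ∃ c : ℝ, 0 < c ∧ m * p.1 + n * p.2 < c * u ∧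
      ∀ x : ℝ × ℝ, 0 ≤ x → c * (a * x.1 + b * x.2) ≤ m * x.1 + n * x.2 := by
  obtain ⟨q₁, haq, hq₁⟩ :=
    exists_rat_gt_of_continuousAt (f := fun t => t * p.1 + b * p.2) (by fun_prop) hp
  obtain ⟨q₂, hbq, hq₂⟩ :=
    exists_rat_gt_of_continuousAt (f := fun t => q₁ * p.1 + t * p.2) (by fun_prop) hq₁
  obtain ⟨m, n, hm, hn, hmn, c, hc, hmc, hnc⟩ :=
    exists_coprime_eq_mul (q₁ := q₁) (by exact_mod_cast ha.trans_lt haq)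
      (by exact_mod_cast hb.trans_lt hbq)
  have hmc' : (m : ℝ) = c * q₁ := by exact_mod_cast hmc
  have hnc' : (n : ℝ) = c * q₂ := by exact_mod_cast hnc
  have hc' : (0 : ℝ) < c := by exact_mod_cast hc
  refine ⟨m, n, hm, hn, hmn, c, hc', ?_, fun x hx => ?_⟩
  · rw [hmc', hnc']
    nlinarith
  · rw [hmc', hnc', mul_assoc, mul_assoc, ← mul_add]
    gcongr
    exacts [hx.1, hx.2]

noncomputable def minWeight (S : Set (ℕ × ℕ)) (m n : ℕ) : ℕ :=
  sInf ((fun p : ℕ × ℕ => m * p.1 + n * p.2) '' S)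

def coprimeHalfplanes (S : Set (ℕ × ℕ)) : Set (ℝ × ℝ) :=
  {p | ∀ m n : ℕ, 0 < m → 0 < n → m.Coprime n → (minWeight S m n : ℝ) ≤ m * p.1 + n * p.2}

lemma minWeight_le {S : Set (ℕ × ℕ)} {s : ℕ × ℕ} (hs : s ∈ S) (m n : ℕ) :
    minWeight S m n ≤ m * s.1 + n * s.2 :=
  Nat.sInf_le ⟨s, hs, rfl⟩

lemma exists_minWeight_eq {S : Set (ℕ × ℕ)} (hS : S.Nonempty) (m n : ℕ) :
    ∃ s ∈ S, minWeight S m n = m * s.1 + n * s.2 := by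
  obtain ⟨s, hs, he⟩ := Nat.sInf_mem (hS.image fun p : ℕ × ℕ => m * p.1 + n * p.2)
  exact ⟨s, hs, he.symm⟩

lemma convex_coprimeHalfplanes (S : Set (ℕ × ℕ)) : Convex ℝ (coprimeHalfplanes S) := by
  intro x hx y hy a b ha hb hab m n hm hn hmn
  have hx' := hx m n hm hn hmn
  have hy' := hy m n hm hn hmn
  simp only [Prod.fst_add, Prod.snd_add, Prod.smul_fst, Prod.smul_snd, smul_eq_mul]
  nlinarith

lemma isUpperSet_coprimeHalfplanes (S : Set (ℕ × ℕ)) : IsUpperSet (coprimeHalfplanes S) := by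
  intro x y hxy hx m n hm hn hmn
  calc (minWeight S m n : ℝ) ≤ m * x.1 + n * x.2 := hx m n hm hn hmn
    _ ≤ m * y.1 + n * y.2 := by gcongr; exacts [hxy.1, hxy.2]

lemma natEmbed_image_subset_coprimeHalfplanes (S : Set (ℕ × ℕ)) :
    natEmbed '' S ⊆ coprimeHalfplanes S := by
  rintro _ ⟨s, hs, rfl⟩ m n - - -
  simpa [natEmbed] using (Nat.cast_le (α := ℝ)).2 (minWeight_le hs m n)

lemma newtonDiagram_subset_coprimeHalfplanes (S : Set (ℕ × ℕ)) :
    newtonDiagram (natEmbed '' S) ⊆ coprimeHalfplanes S :=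
  newtonDiagram_subset (convex_coprimeHalfplanes S) (isUpperSet_coprimeHalfplanes S)
    (natEmbed_image_subset_coprimeHalfplanes S)

lemma exists_coprime_lt_minWeight_of_notMem {S : Set (ℕ × ℕ)} (hS : S.Nonempty) {p : ℝ × ℝ}
    (hp : p ∉ newtonDiagram (natEmbed '' S)) :
    ∃ m n : ℕ, 0 < m ∧ 0 < n ∧ m.Coprime n ∧ m * p.1 + n * p.2 < (minWeight S m n : ℝ) := by
  obtain ⟨a, b, u, ha, hb, hpu, hsep⟩ := exists_nonneg_weight_separating
    (convex_newtonDiagram _) (isClosed_newtonDiagram_natEmbed S) (isUpperSet_newtonDiagram _)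
    ((hS.image natEmbed).mono (subset_newtonDiagram _)) hp
  obtain ⟨m, n, hm, hn, hmn, c, hc, hpc, hdom⟩ := exists_coprime_weight_of_nonneg_weight ha hb hpu
  obtain ⟨s, hs, hsmin⟩ := exists_minWeight_eq hS m n
  refine ⟨m, n, hm, hn, hmn, ?_⟩
  calc m * p.1 + n * p.2 < c * u := hpc
    _ < c * (a * (natEmbed s).1 + b * (natEmbed s).2) :=
      mul_lt_mul_of_pos_left (hsep _ (subset_newtonDiagram _ (mem_image_of_mem _ hs))) hc
    _ ≤ m * (natEmbed s).1 + n * (natEmbed s).2 := hdom _ (natEmbed_nonneg s)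
    _ = minWeight S m n := by rw [hsmin]; simp [natEmbed]

lemma newtonDiagram_eq_coprimeHalfplanes {S : Set (ℕ × ℕ)} (hS : S.Nonempty) :
    newtonDiagram (natEmbed '' S) = coprimeHalfplanes S := by
  refine (newtonDiagram_subset_coprimeHalfplanes S).antisymm fun p hp => ?_
  by_contra hpS
  obtain ⟨m, n, hm, hn, hmn, hlt⟩ := exists_coprime_lt_minWeight_of_notMem hS hpS
  exact (hp m n hm hn hmn).not_gt hlt

/-- If two nonempty subsets `S, T ⊆ ℕ²` have the same minimal value
of `m·i + n·j` for every pair of coprime positive integers `(m, n)`, then their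
Newton diagrams coincide. -/
theorem newtonDiagram_eq_of_min_eq (S T : Set (ℕ × ℕ)) (hS : S.Nonempty) (hT : T.Nonempty)
    (h : ∀ m n : ℕ, 0 < m → 0 < n → Nat.Coprime m n →
      sInf ((fun p : ℕ × ℕ => m * p.1 + n * p.2) '' S) =
        sInf ((fun p : ℕ × ℕ => m * p.1 + n * p.2) '' T)) :
    newtonDiagram (natEmbed '' S) = newtonDiagram (natEmbed '' T) := by
  rw [newtonDiagram_eq_coprimeHalfplanes hS, newtonDiagram_eq_coprimeHalfplanes hT]
  ext p
  refine forall₂_congr fun m n => forall₃_congr fun hm hn hmn => ?_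
  rw [minWeight, minWeight, h m n hm hn hmn]
end

section
/- Let p, q ∈ ℕ², let (a₁,b₁), …, (a_k,b_k) and (c₁,d₁), …, (c_l,d_l) be pairs of positive integers such that the inclinations a₁/b₁, …, a_k/b_k are pairwise distinct and the inclinations c₁/d₁, …, c_l/d_l are pairwise distinct. If the Minkowski sums {p} + Teis(a₁,b₁) + ⋯ + Teis(a_k,b_k) and {q} + Teis(c₁,d₁) + ⋯ + Teis(c_l,d_l) are equal as subsets of ℝ², then p = q, k = l, and the multiset of pairs {(a₁,b₁),…,(a_k,b_k)} equals the multiset {(c₁,d₁),…,(c_l,d_l)}. In particular, the set of inclinations appearing in such a decomposition of a Newton diagram does not depend on the choice of decomposition. -/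
/-!
For weights `u, v ≥ 0`, the minimum of `u x + v y` over a Minkowski sum is the sum of the
minima over the summands: it is `u p₁ + v p₂` on `{p}`, `0` on `ℝ₊²` and `min (v b) (u a)` on
`Teis(a,b)`. Equal diagrams therefore have equal minima; the weights `(1,0)` and `(0,1)` recover
the point, and the weights `(1,t)` give the concave piecewise linear function
`t ↦ ∑ᵢ min (t bᵢ) aᵢ`, whose slope drops by `bᵢ` exactly at `t = aᵢ/bᵢ`. Since inclinations are
distinct, each kink belongs to a single summand, and a second difference at the kink reads off
the pair `(aᵢ, bᵢ)`.
-/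

open Pointwise

/-- The elementary Newton diagram `Teis(a,b) = conv{(0,b),(a,0)} + ℝ₊²`. -/
noncomputable def Teis (a b : ℕ) : Set (ℝ × ℝ) :=
  convexHull ℝ {((0 : ℝ), (b : ℝ)), ((a : ℝ), (0 : ℝ))} + firstQuadrant

open Filter Topology Function Set

theorem IsLeast.add {M : Type*} [Add M] [Preorder M] [AddLeftMono M] [AddRightMono M]
    {s t : Set M} {a b : M} (ha : IsLeast s a) (hb : IsLeast t b) : IsLeast (s + t) (a + b) :=
  ⟨add_mem_add ha.1 hb.1, add_mem_lowerBounds_add ha.2 hb.2⟩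

theorem isLeast_finsetSum {ι M : Type*} [AddCommMonoid M] [Preorder M] [AddLeftMono M]
    {s : Finset ι} {A : ι → Set M} {m : ι → M} (h : ∀ i ∈ s, IsLeast (A i) (m i)) :
    IsLeast (∑ i ∈ s, A i) (∑ i ∈ s, m i) := by
  induction s using Finset.cons_induction with
  | empty =>
    rw [Finset.sum_empty, Finset.sum_empty, ← singleton_zero]
    exact isLeast_singleton
  | cons i s hi ih =>
    rw [Finset.sum_cons, Finset.sum_cons]
    exact (h i (Finset.mem_cons_self i s)).add (ih fun j hj => h j (Finset.mem_cons_of_mem hj))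

theorem isLeast_image_convexHull_pair {E : Type*} [AddCommGroup E] [Module ℝ E]
    (ℓ : E →ₗ[ℝ] ℝ) (x y : E) : IsLeast (ℓ '' convexHull ℝ {x, y}) (min (ℓ x) (ℓ y)) := by
  rw [convexHull_pair, ← ℓ.coe_toAffineMap, image_segment, segment_eq_uIcc]
  exact isLeast_Icc (inf_le_sup (a := ℓ x))

def weightedSum (u v : ℝ) : ℝ × ℝ →ₗ[ℝ] ℝ := u • LinearMap.fst ℝ ℝ ℝ + v • LinearMap.snd ℝ ℝ ℝ

@[simp]
theorem weightedSum_apply (u v : ℝ) (z : ℝ × ℝ) : weightedSum u v z = u * z.1 + v * z.2 := rfl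

theorem isLeast_weightedSum_firstQuadrant {u v : ℝ} (hu : 0 ≤ u) (hv : 0 ≤ v) :
    IsLeast (weightedSum u v '' firstQuadrant) 0 := by
  refine ⟨⟨0, ⟨le_rfl, le_rfl⟩, by simp⟩, ?_⟩
  rintro _ ⟨z, ⟨hz₁, hz₂⟩, rfl⟩
  simp only [weightedSum_apply]
  positivity

theorem isLeast_weightedSum_Teis {u v : ℝ} (hu : 0 ≤ u) (hv : 0 ≤ v) (a b : ℕ) :
    IsLeast (weightedSum u v '' Teis a b) (min (v * b) (u * a)) := by
  rw [Teis, image_add]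
  simpa using
    (isLeast_image_convexHull_pair (weightedSum u v) ((0 : ℝ), (b : ℝ)) ((a : ℝ), 0)).add
      (isLeast_weightedSum_firstQuadrant hu hv)

theorem isLeast_weightedSum_diagram {ι : Type*} [Fintype ι] {u v : ℝ} (hu : 0 ≤ u) (hv : 0 ≤ v)
    (P : ℕ × ℕ) (a b : ι → ℕ) :
    IsLeast (weightedSum u v ''
        ({((P.1 : ℝ), (P.2 : ℝ))} + firstQuadrant + ∑ i, Teis (a i) (b i)))
      (u * P.1 + v * P.2 + ∑ i, min (v * b i) (u * a i)) := by
  rw [image_add, image_add, image_finsetSum, image_singleton]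
  simpa using ((isLeast_singleton (a := weightedSum u v ((P.1 : ℝ), (P.2 : ℝ)))).add
    (isLeast_weightedSum_firstQuadrant hu hv)).add
    (isLeast_finsetSum (s := Finset.univ) fun i _ => isLeast_weightedSum_Teis hu hv (a i) (b i))

theorem eventually_min_secondDiff (a b r : ℝ) (hb : 0 < b) :
    ∀ᶠ ε in 𝓝[>] 0, min ((r + ε) * b) a + min ((r - ε) * b) a - 2 * min (r * b) a =
      if a / b = r then -(ε * b) else 0 := by
  split_ifs with h
  · filter_upwards [self_mem_nhdsWithin] with ε (hε : 0 < ε)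
    obtain rfl : a = r * b := (div_eq_iff hb.ne').1 h
    rw [min_eq_right (by nlinarith), min_eq_left (by nlinarith), min_self]
    ring
  · rcases lt_or_gt_of_ne h with h | h
    · filter_upwards [self_mem_nhdsWithin,
        eventually_nhdsWithin_of_eventually_nhds (eventually_lt_nhds (sub_pos.2 h))]
        with ε (hε : 0 < ε) hεr
      have : a ≤ (r - ε) * b := (div_le_iff₀ hb).1 (by linarith)
      rw [min_eq_right (by nlinarith), min_eq_right this, min_eq_right (by nlinarith)]
      ring
    · filter_upwards [self_mem_nhdsWithin,
        eventually_nhdsWithin_of_eventually_nhds (eventually_lt_nhds (sub_pos.2 h))]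
        with ε (hε : 0 < ε) hεr
      have : (r + ε) * b ≤ a := (le_div_iff₀ hb).1 (by linarith)
      rw [min_eq_left this, min_eq_left (by nlinarith), min_eq_left (by nlinarith)]
      ring

section Kinks

variable {ι κ : Type*} [Fintype ι] [Fintype κ]

/-- The slope of `t ↦ ∑ i, min (t * b i) (a i)` drops by `kinkWeight a b r` at `t = r`. -/
noncomputable def kinkWeight (a b : ι → ℝ) (r : ℝ) : ℝ := ∑ i, if a i / b i = r then b i else 0

theorem eventually_sum_min_secondDiff (a b : ι → ℝ) (hb : ∀ i, 0 < b i) (r : ℝ) :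
    ∀ᶠ ε in 𝓝[>] 0,
      (∑ i, min ((r + ε) * b i) (a i)) + (∑ i, min ((r - ε) * b i) (a i)) -
        2 * ∑ i, min (r * b i) (a i) = -(ε * kinkWeight a b r) := by
  filter_upwards [eventually_all.2 fun i => eventually_min_secondDiff (a i) (b i) r (hb i)]
    with ε hε
  simp only [kinkWeight, Finset.mul_sum, ← Finset.sum_neg_distrib, mul_ite, mul_zero, neg_ite,
    neg_zero, ← hε, Finset.sum_sub_distrib, Finset.sum_add_distrib]

theorem kinkWeight_eq_of_eqOn {a b : ι → ℝ} {c d : κ → ℝ} (hb : ∀ i, 0 < b i)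
    (hd : ∀ j, 0 < d j)
    (h : EqOn (fun t => ∑ i, min (t * b i) (a i)) (fun t => ∑ j, min (t * d j) (c j)) (Ioi 0))
    {r : ℝ} (hr : 0 < r) : kinkWeight a b r = kinkWeight c d r := by
  simp only [EqOn, mem_Ioi] at h
  obtain ⟨ε, hab, hcd, hεr, hε : 0 < ε⟩ := ((eventually_sum_min_secondDiff a b hb r).and
    ((eventually_sum_min_secondDiff c d hd r).and
      ((eventually_nhdsWithin_of_eventually_nhds (eventually_lt_nhds hr)).and
        self_mem_nhdsWithin))).exists
  have : -(ε * kinkWeight a b r) = -(ε * kinkWeight c d r) := by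
    rw [← hab, ← hcd, h (show 0 < r + ε by linarith), h (show 0 < r - ε by linarith), h hr]
  exact mul_left_cancel₀ hε.ne' (neg_inj.1 this)

theorem kinkWeight_inclination {a b : ι → ℝ} (hinj : Injective fun i => a i / b i) (i : ι) :
    kinkWeight a b (a i / b i) = b i :=
  (Finset.sum_eq_single i (fun j _ hji => if_neg (hinj.ne hji)) (by simp)).trans (if_pos rfl)

theorem exists_eq_of_eqOn_sum_min {a b : ι → ℝ} {c d : κ → ℝ} (ha : ∀ i, 0 < a i)
    (hb : ∀ i, 0 < b i) (hd : ∀ j, 0 < d j) (hab : Injective fun i => a i / b i)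
    (hcd : Injective fun j => c j / d j)
    (h : EqOn (fun t => ∑ i, min (t * b i) (a i)) (fun t => ∑ j, min (t * d j) (c j)) (Ioi 0))
    (i : ι) : ∃ j, c j = a i ∧ d j = b i := by
  have hweight := kinkWeight_eq_of_eqOn hb hd h (div_pos (ha i) (hb i))
  rw [kinkWeight_inclination hab] at hweight
  obtain ⟨j, -, hj⟩ := Finset.exists_ne_zero_of_sum_ne_zero (hweight ▸ (hb i).ne')
  have hincl : c j / d j = a i / b i := by_contra fun hne => hj (if_neg hne)
  rw [← hincl, kinkWeight_inclination hcd] at hweight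
  refine ⟨j, ?_, hweight.symm⟩
  rwa [← hweight, div_left_inj' (hb i).ne'] at hincl

end Kinks

theorem injective_real_div_of_injective_rat_div {ι : Type*} {a b : ι → ℕ}
    (h : Injective fun i => (a i : ℚ) / b i) : Injective fun i => (a i : ℝ) / b i :=
  fun i j hij => h (Rat.cast_injective (α := ℝ) (by push_cast; exact hij))

theorem range_subset_range_of_eqOn_sum_min {ι κ : Type*} [Fintype ι] [Fintype κ]
    {a b : ι → ℕ} {c d : κ → ℕ} (ha : ∀ i, 0 < a i) (hb : ∀ i, 0 < b i) (hd : ∀ j, 0 < d j)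
    (hab : Injective fun i => (a i : ℚ) / b i) (hcd : Injective fun j => (c j : ℚ) / d j)
    (h : EqOn (fun t : ℝ => ∑ i, min (t * b i) (a i)) (fun t => ∑ j, min (t * d j) (c j))
      (Ioi 0)) :
    range (fun i => (a i, b i)) ⊆ range fun j => (c j, d j) := by
  rintro _ ⟨i, rfl⟩
  obtain ⟨j, hc, hd⟩ := exists_eq_of_eqOn_sum_min (fun i => Nat.cast_pos.2 (ha i))
    (fun i => Nat.cast_pos.2 (hb i)) (fun j => Nat.cast_pos.2 (hd j))
    (injective_real_div_of_injective_rat_div hab) (injective_real_div_of_injective_rat_div hcd) h i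
  exact ⟨j, Prod.ext (Nat.cast_injective hc) (Nat.cast_injective hd)⟩

theorem Multiset.map_univ_eq_of_range_eq {ι κ α : Type*} [Fintype ι] [Fintype κ] {f : ι → α}
    {g : κ → α} (hf : Injective f) (hg : Injective g) (h : Set.range f = Set.range g) :
    Finset.univ.val.map f = Finset.univ.val.map g :=
  (Nodup.ext (Finset.univ.nodup.map hf) (Finset.univ.nodup.map hg)).2 fun x => by
    simpa using congrArg (x ∈ ·) h

/-- Uniqueness of the decomposition of a Newton diagram as a Minkowski
sum of a point of `ℕ²` and elementary Newton diagrams with pairwise distinct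
inclinations: the point, the number of elementary diagrams and the multiset of pairs
`(aᵢ, bᵢ)` are uniquely determined.
(The empty Minkowski sum of Newton diagrams is `ℝ₊²`, the neutral element of the
semigroup of Newton diagrams; since `Teis a b + ℝ₊² = Teis a b`, including the
summand `ℝ₊²` is harmless when the lists are nonempty.) -/
theorem Teis_decomposition_unique (p q : ℕ × ℕ) (k l : ℕ)
    (a b : Fin k → ℕ) (c d : Fin l → ℕ)
    (ha : ∀ i, 0 < a i) (hb : ∀ i, 0 < b i) (hc : ∀ i, 0 < c i) (hd : ∀ i, 0 < d i)
    (hab : ∀ i j : Fin k, (a i : ℚ) / (b i : ℚ) = (a j : ℚ) / (b j : ℚ) → i = j)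
    (hcd : ∀ i j : Fin l, (c i : ℚ) / (d i : ℚ) = (c j : ℚ) / (d j : ℚ) → i = j)
    (heq : {(((p.1 : ℝ), (p.2 : ℝ)) : ℝ × ℝ)} + firstQuadrant +
        ∑ i : Fin k, Teis (a i) (b i) =
      {(((q.1 : ℝ), (q.2 : ℝ)) : ℝ × ℝ)} + firstQuadrant +
        ∑ i : Fin l, Teis (c i) (d i)) :
    p = q ∧ k = l ∧
      Multiset.map (fun i => (a i, b i)) Finset.univ.val =
        Multiset.map (fun i => (c i, d i)) Finset.univ.val := by
  have hmin (u v : ℝ) (hu : 0 ≤ u) (hv : 0 ≤ v) :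
      u * p.1 + v * p.2 + ∑ i, min (v * b i) (u * a i) =
        u * q.1 + v * q.2 + ∑ j, min (v * d j) (u * c j) :=
    (isLeast_weightedSum_diagram hu hv p a b).unique
      (heq ▸ isLeast_weightedSum_diagram hu hv q c d)
  have hpq : p = q := Prod.ext (by simpa using hmin 1 0 zero_le_one le_rfl)
    (by simpa using hmin 0 1 le_rfl zero_le_one)
  subst hpq
  have hG : EqOn (fun t : ℝ => ∑ i, min (t * b i) (a i)) (fun t => ∑ j, min (t * d j) (c j))
      (Ioi 0) := fun t ht => by simpa using hmin 1 t zero_le_one (le_of_lt ht)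
  have hpairs : range (fun i => (a i, b i)) = range fun j => (c j, d j) :=
    (range_subset_range_of_eqOn_sum_min ha hb hd hab hcd hG).antisymm
      (range_subset_range_of_eqOn_sum_min hc hd hb hcd hab hG.symm)
  have hmap := Multiset.map_univ_eq_of_range_eq
    (Injective.of_comp (f := fun x : ℕ × ℕ => (x.1 : ℚ) / x.2) (g := fun i => (a i, b i)) hab)
    (Injective.of_comp (f := fun x : ℕ × ℕ => (x.1 : ℚ) / x.2) (g := fun j => (c j, d j)) hcd)
    hpairs
  exact ⟨rfl, by simpa using congrArg Multiset.card hmap, hmap⟩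
end

section
/- Let a, b, c, d be positive integers. Then the Minkowski sum Teis(a,b) + Teis(c,d) equals Teis(a+c, b+d) if and only if a·d = b·c (i.e. if and only if the inclinations a/b and c/d coincide). -/
open Pointwise

lemma pair_add_pair (p q r s : ℝ × ℝ) :
    ({p, q} : Set (ℝ × ℝ)) + {r, s} = {p + r, p + s, q + r, q + s} := by
  rw [Set.insert_eq p, Set.insert_eq r, Set.union_add, Set.add_union, Set.add_union,
    Set.singleton_add_singleton, Set.singleton_add_singleton, Set.singleton_add_singleton,
    Set.singleton_add_singleton]
  ext z
  simp only [Set.mem_union, Set.mem_insert_iff, Set.mem_singleton_iff]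
  tauto

lemma Q_add_Q : firstQuadrant + firstQuadrant = firstQuadrant := by
  ext p
  constructor
  · rintro ⟨q, hq, r, hr, rfl⟩
    exact ⟨add_nonneg hq.1 hr.1, add_nonneg hq.2 hr.2⟩
  · intro hp
    exact ⟨p, hp, 0, ⟨le_refl 0, le_refl 0⟩, by simp⟩

lemma Teis_ineq (A B : ℕ) (p : ℝ × ℝ) (hp : p ∈ Teis A B) :
    (A : ℝ) * B ≤ (B : ℝ) * p.1 + (A : ℝ) * p.2 := by
  obtain ⟨q, hq, r, hr, rfl⟩ := hp
  rw [convexHull_pair] at hq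
  obtain ⟨s, t, hs, ht, hst, rfl⟩ := hq
  obtain ⟨hr1, hr2⟩ := hr
  have hA : (0:ℝ) ≤ A := Nat.cast_nonneg A
  have hB : (0:ℝ) ≤ B := Nat.cast_nonneg B
  simp only [Prod.fst_add, Prod.snd_add, Prod.smul_fst, Prod.smul_snd, smul_eq_mul]
  have key : (B:ℝ)*(s*0+t*A+r.1) + A*(s*B+t*0+r.2) = A*B*(s+t) + (B*r.1 + A*r.2) := by ring
  rw [hst, mul_one] at key
  rw [key]
  nlinarith [mul_nonneg hB hr1, mul_nonneg hA hr2]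

lemma Teis_add_decomp (a b c d : ℕ) :
    Teis a b + Teis c d =
      convexHull ℝ {((0:ℝ), (b:ℝ)+(d:ℝ)), ((c:ℝ), (b:ℝ)), ((a:ℝ), (d:ℝ)),
        ((a:ℝ)+(c:ℝ), (0:ℝ))} + firstQuadrant := by
  unfold Teis
  rw [add_add_add_comm, Q_add_Q, ← convexHull_add, pair_add_pair]
  norm_num [Prod.mk_add_mk]

/-- For positive integers `a, b, c, d`, the Minkowski sum
`Teis(a,b) + Teis(c,d)` equals `Teis(a+c, b+d)` if and only if `a·d = b·c`,
i.e. iff the inclinations `a/b` and `c/d` coincide. -/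
theorem Teis_add_Teis_eq_iff (a b c d : ℕ)
    (ha : 0 < a) (hb : 0 < b) (hc : 0 < c) (hd : 0 < d) :
    Teis a b + Teis c d = Teis (a + c) (b + d) ↔ a * d = b * c := by
  constructor
  · intro h
    have m1 : ((0:ℝ), (b:ℝ)) ∈ Teis a b :=
      ⟨((0:ℝ), (b:ℝ)), subset_convexHull ℝ _ (by simp), 0, ⟨le_refl 0, le_refl 0⟩, by simp⟩
    have m2 : ((c:ℝ), (0:ℝ)) ∈ Teis c d :=
      ⟨((c:ℝ), (0:ℝ)), subset_convexHull ℝ _ (by simp), 0, ⟨le_refl 0, le_refl 0⟩, by simp⟩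
    have m3 : ((a:ℝ), (0:ℝ)) ∈ Teis a b :=
      ⟨((a:ℝ), (0:ℝ)), subset_convexHull ℝ _ (by simp), 0, ⟨le_refl 0, le_refl 0⟩, by simp⟩
    have m4 : ((0:ℝ), (d:ℝ)) ∈ Teis c d :=
      ⟨((0:ℝ), (d:ℝ)), subset_convexHull ℝ _ (by simp), 0, ⟨le_refl 0, le_refl 0⟩, by simp⟩
    have h1 := Teis_ineq (a+c) (b+d) _ (h ▸ Set.add_mem_add m1 m2)
    have h2 := Teis_ineq (a+c) (b+d) _ (h ▸ Set.add_mem_add m3 m4)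
    simp only [Prod.fst_add, Prod.snd_add] at h1 h2
    push_cast at h1 h2
    have : (a:ℝ) * d = b * c := by nlinarith
    exact_mod_cast this
  · intro h
    have hR : (a:ℝ) * d = b * c := by exact_mod_cast h
    have hac : (0:ℝ) < (a:ℝ) + c := by positivity
    have hconv : convexHull ℝ ({((0:ℝ), (b:ℝ)+(d:ℝ)), ((c:ℝ), (b:ℝ)), ((a:ℝ), (d:ℝ)),
        ((a:ℝ)+(c:ℝ), (0:ℝ))} : Set (ℝ × ℝ)) =
        convexHull ℝ {((0:ℝ), (b:ℝ)+(d:ℝ)), ((a:ℝ)+(c:ℝ), (0:ℝ))} := by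
      apply Set.Subset.antisymm
      · apply convexHull_min _ (convex_convexHull ℝ _)
        intro z hz
        rw [convexHull_pair]
        rcases hz with rfl | rfl | rfl | rfl
        · exact left_mem_segment ℝ _ _
        · refine ⟨(a:ℝ)/((a:ℝ)+c), (c:ℝ)/((a:ℝ)+c), by positivity, by positivity,
            by field_simp <;> ring, ?_⟩
          apply Prod.ext
          · simp only [Prod.fst_add, Prod.smul_fst, smul_eq_mul]
            field_simp
            try ring
          · simp only [Prod.snd_add, Prod.smul_snd, smul_eq_mul]
            field_simp
            nlinarith
        · refine ⟨(c:ℝ)/((a:ℝ)+c), (a:ℝ)/((a:ℝ)+c), by positivity, by positivity,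
            by field_simp <;> ring, ?_⟩
          apply Prod.ext
          · simp only [Prod.fst_add, Prod.smul_fst, smul_eq_mul]
            field_simp
            try ring
          · simp only [Prod.snd_add, Prod.smul_snd, smul_eq_mul]
            field_simp
            nlinarith
        · exact right_mem_segment ℝ _ _
      · apply convexHull_mono
        intro z hz
        rcases hz with rfl | rfl
        · exact Set.mem_insert _ _
        · simp
    rw [Teis_add_decomp, hconv]
    unfold Teis
    push_cast
    rfl
end

section
/- Let m, n be coprime positive integers and let t ∈ ℂ with t ≠ 0. Then the formal power series Xⁿ − t·Yᵐ is irreducible in the ring ℂ[[X,Y]] of formal power series in two variables over ℂ. -/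
/-!
Pick `a` with `aⁿ = t` and substitute `X ↦ a sᵐ`, `Y ↦ sⁿ` into `ℂ[[s]]`; this kills
`f = Xⁿ - t Yᵐ`. Conversely, reducing with `Xⁿ ≡ t Yᵐ` writes any `g` as `f q + r` with `r` of
`X`-degree `< n`. Since `m` and `n` are coprime, the monomials `XⁱYʲ` with `i < n` go to distinct
powers `s^(mi + nj)`, so a remainder in the kernel is zero. Thus `(f)` is the kernel of a map
into a domain, hence prime.
-/

open MvPowerSeries Finset Finsupp

theorem Nat.Coprime.eq_and_eq_of_mul_add_mul_eq {m n i j i' j' : ℕ} (hmn : m.Coprime n)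
    (hi : i < n) (hi' : i' < n) (h : m * i + n * j = m * i' + n * j') : i = i' ∧ j = j' := by
  have hmod : m * i ≡ m * i' [MOD n] := by
    simpa [Nat.ModEq, Nat.add_mul_mod_self_left] using congrArg (· % n) h
  have hii' : i = i' :=
    (Nat.ModEq.cancel_left_of_coprime (Nat.coprime_comm.mp hmn) hmod).eq_of_lt_of_lt hi hi'
  subst hii'
  exact ⟨rfl, Nat.eq_of_mul_eq_mul_left (show 0 < n by omega) (by omega)⟩

namespace MvPowerSeries

section Division

variable {R : Type*} [CommRing R] (t : R) (m n : ℕ) (g : MvPowerSeries (Fin 2) R)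

/-- Modulo `Xⁿ - t Yᵐ` the monomial `X^(d₀ + rn) Y^(d₁ - rm)` is `tʳ X^d₀ Y^d₁`; this sums their
contributions to `X^d₀ Y^d₁`. For `d₀ < n` it is the coefficient of the remainder. -/
noncomputable def foldCoeff (d : Fin 2 →₀ ℕ) : R :=
  ∑ r ∈ range (d 1 / m + 1), t ^ r * coeff (d + single 0 (r * n) - single 1 (r * m)) g

noncomputable def divQuot : MvPowerSeries (Fin 2) R :=
  fun e => foldCoeff t m n g (e + single 0 n)

noncomputable def divRem : MvPowerSeries (Fin 2) R :=
  fun d => if d 0 < n then foldCoeff t m n g d else 0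

variable {m n}

theorem foldCoeff_of_lt {d : Fin 2 →₀ ℕ} (hd : d 1 < m) :
    foldCoeff t m n g d = coeff d g := by
  simp [foldCoeff, Nat.div_eq_of_lt hd]

theorem foldCoeff_of_le (hm : 0 < m) {d : Fin 2 →₀ ℕ} (hd : m ≤ d 1) :
    foldCoeff t m n g d =
      coeff d g + t * foldCoeff t m n g (d + single 0 n - single 1 m) := by
  have hshift (r : ℕ) : d + single 0 ((r + 1) * n) - single 1 ((r + 1) * m) =
      d + single 0 n - single 1 m + single 0 (r * n) - single 1 (r * m) := by
    ext i; fin_cases i <;> simp [add_mul] <;> omega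
  have hd' : (d + single 0 n - single 1 m : Fin 2 →₀ ℕ) 1 = d 1 - m := by simp
  rw [foldCoeff, Nat.div_eq_sub_div hm hd, sum_range_succ', foldCoeff, hd', Finset.mul_sum]
  simp only [hshift, pow_succ, zero_mul, single_zero, add_zero, tsub_zero, pow_zero, one_mul]
  rw [add_comm]
  congr 1
  exact sum_congr rfl fun r _ => by ring

theorem coeff_divQuot (e : Fin 2 →₀ ℕ) :
    coeff e (divQuot t m n g) = foldCoeff t m n g (e + single 0 n) := rfl

theorem coeff_divRem_of_le {d : Fin 2 →₀ ℕ} (hd : n ≤ d 0) : coeff d (divRem t m n g) = 0 :=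
  if_neg hd.not_gt

theorem coeff_X_pow_mul_divQuot_add_divRem (d : Fin 2 →₀ ℕ) :
    coeff d (X 0 ^ n * divQuot t m n g + divRem t m n g) = foldCoeff t m n g d := by
  rw [map_add, X_pow_eq, coeff_monomial_mul]
  split_ifs with h
  · rw [coeff_divRem_of_le t g (single_le_iff.mp h), one_mul, add_zero, coeff_divQuot,
      tsub_add_cancel_of_le h]
  · exact (zero_add _).trans (if_pos (not_le.mp (mt single_le_iff.mpr h)))

theorem coeff_C_mul_X_pow_mul_divQuot (hm : 0 < m) (d : Fin 2 →₀ ℕ) :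
    coeff d (C t * X 1 ^ m * divQuot t m n g) = foldCoeff t m n g d - coeff d g := by
  rw [mul_assoc, coeff_C_mul, X_pow_eq, coeff_monomial_mul]
  split_ifs with h
  · have hd : d - single 1 m + single 0 n = d + single 0 n - single 1 m := by
      ext i; fin_cases i <;> simp
    rw [foldCoeff_of_le t g hm (single_le_iff.mp h), one_mul, coeff_divQuot, hd,
      add_sub_cancel_left]
  · rw [foldCoeff_of_lt t g (not_le.mp (mt single_le_iff.mpr h)), mul_zero, sub_self]

theorem eq_mul_divQuot_add_divRem (hm : 0 < m) :
    g = (X 0 ^ n - C t * X 1 ^ m) * divQuot t m n g + divRem t m n g := by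
  ext d
  rw [show (X 0 ^ n - C t * X 1 ^ m) * divQuot t m n g + divRem t m n g =
      (X 0 ^ n * divQuot t m n g + divRem t m n g) - C t * X 1 ^ m * divQuot t m n g by ring,
    map_sub, coeff_X_pow_mul_divQuot_add_divRem, coeff_C_mul_X_pow_mul_divQuot t g hm,
    sub_sub_cancel]

end Division

section Substitution

variable {R : Type*} [CommRing R] (a : R) (m n : ℕ)

noncomputable def monomialCurve : Fin 2 → PowerSeries R :=
  ![PowerSeries.C a * PowerSeries.X ^ m, PowerSeries.X ^ n]

variable {m n}

theorem hasSubst_monomialCurve (hm : m ≠ 0) (hn : n ≠ 0) : HasSubst (monomialCurve a m n) :=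
  hasSubst_of_constantCoeff_zero fun i => by
    fin_cases i
    · change PowerSeries.constantCoeff (PowerSeries.C a * PowerSeries.X ^ m) = 0
      simp [hm]
    · change PowerSeries.constantCoeff (PowerSeries.X ^ n) = 0
      simp [hn]

theorem prod_monomialCurve_pow (d : Fin 2 →₀ ℕ) :
    d.prod (fun i k => monomialCurve a m n i ^ k) =
      PowerSeries.C (a ^ d 0) * PowerSeries.X ^ (m * d 0 + n * d 1) := by
  rw [Finsupp.prod_fintype _ _ fun _ => pow_zero _, Fin.prod_univ_two]
  simp only [monomialCurve, Matrix.cons_val_zero, Matrix.cons_val_one, mul_pow, map_pow, pow_add,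
    pow_mul]
  ring

theorem coeff_subst_monomialCurve (hm : m ≠ 0) (hn : n ≠ 0) (g : MvPowerSeries (Fin 2) R)
    (k : ℕ) :
    PowerSeries.coeff k (subst (monomialCurve a m n) g) =
      ∑ᶠ d : Fin 2 →₀ ℕ, if m * d 0 + n * d 1 = k then a ^ d 0 * coeff d g else 0 := by
  rw [PowerSeries.coeff_def (s := single () k) (n := k) (by simp),
    coeff_subst (hasSubst_monomialCurve a hm hn)]
  refine finsum_congr fun d => ?_
  rw [prod_monomialCurve_pow, ← PowerSeries.coeff_def rfl, single_eq_same,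
    PowerSeries.coeff_C_mul_X_pow, smul_eq_mul, mul_ite, mul_zero]
  exact if_congr eq_comm (mul_comm _ _) rfl

theorem coeff_subst_monomialCurve_of_forall_le (hm : m ≠ 0) (hmn : m.Coprime n)
    {g : MvPowerSeries (Fin 2) R} (hg : ∀ d : Fin 2 →₀ ℕ, n ≤ d 0 → coeff d g = 0)
    {d : Fin 2 →₀ ℕ} (hd : d 0 < n) :
    PowerSeries.coeff (m * d 0 + n * d 1) (subst (monomialCurve a m n) g) =
      a ^ d 0 * coeff d g := by
  rw [coeff_subst_monomialCurve a hm (by omega), finsum_eq_single _ d, if_pos rfl]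
  intro e he
  split_ifs with hw
  · by_cases he0 : n ≤ e 0
    · rw [hg e he0, mul_zero]
    obtain ⟨h0, h1⟩ := hmn.eq_and_eq_of_mul_add_mul_eq (not_le.mp he0) hd hw
    exact absurd (Finsupp.ext fun i => by fin_cases i <;> assumption) he
  · rfl

theorem subst_monomialCurve_X_pow_sub_C_pow_mul_X_pow (hm : m ≠ 0) (hn : n ≠ 0) :
    subst (monomialCurve a m n) (X 0 ^ n - C (a ^ n) * X 1 ^ m : MvPowerSeries (Fin 2) R) = 0 := by
  have ha := hasSubst_monomialCurve a hm hn
  rw [subst_sub ha, subst_mul ha, subst_pow ha, subst_pow ha, subst_X ha, subst_X ha, subst_C]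
  simp only [monomialCurve, Matrix.cons_val_zero, Matrix.cons_val_one, mul_pow, ← pow_mul,
    map_pow]
  rw [mul_comm m n]
  exact sub_eq_zero.mpr rfl

theorem X_pow_sub_C_pow_mul_X_pow_dvd_of_subst_eq_zero [IsDomain R] {a : R} (ha : a ≠ 0)
    (hm : m ≠ 0) (hn : n ≠ 0) (hmn : m.Coprime n) {g : MvPowerSeries (Fin 2) R}
    (hg : subst (monomialCurve a m n) g = 0) : X 0 ^ n - C (a ^ n) * X 1 ^ m ∣ g := by
  have hs := hasSubst_monomialCurve a hm hn
  have hdiv := eq_mul_divQuot_add_divRem (a ^ n) (n := n) g (Nat.pos_of_ne_zero hm)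
  set f : MvPowerSeries (Fin 2) R := X 0 ^ n - C (a ^ n) * X 1 ^ m
  set r := divRem (a ^ n) m n g
  have hr : subst (monomialCurve a m n) r = 0 := by
    rw [eq_sub_of_add_eq' hdiv.symm, subst_sub hs, subst_mul hs, hg,
      subst_monomialCurve_X_pow_sub_C_pow_mul_X_pow a hm hn, zero_mul, sub_zero]
  have hr_le (e : Fin 2 →₀ ℕ) : n ≤ e 0 → coeff e r = 0 := coeff_divRem_of_le _ g
  suffices r = 0 from ⟨_, by rwa [this, add_zero] at hdiv⟩
  ext d
  rw [map_zero]
  by_cases hd : n ≤ d 0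
  · exact hr_le d hd
  have hcoeff := coeff_subst_monomialCurve_of_forall_le a hm hmn hr_le (not_le.mp hd)
  rw [hr, map_zero, eq_comm] at hcoeff
  exact (mul_eq_zero.mp hcoeff).resolve_left (pow_ne_zero _ ha)

theorem ker_substAlgHom_monomialCurve [IsDomain R] {a : R} (ha : a ≠ 0) (hm : m ≠ 0)
    (hn : n ≠ 0) (hmn : m.Coprime n) :
    RingHom.ker (substAlgHom (R := R) (hasSubst_monomialCurve a hm hn)) =
      Ideal.span {X 0 ^ n - C (a ^ n) * X 1 ^ m} := by
  ext g
  rw [RingHom.mem_ker, substAlgHom_apply, Ideal.mem_span_singleton]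
  refine ⟨X_pow_sub_C_pow_mul_X_pow_dvd_of_subst_eq_zero ha hm hn hmn, ?_⟩
  rintro ⟨q, rfl⟩
  rw [subst_mul (hasSubst_monomialCurve a hm hn),
    subst_monomialCurve_X_pow_sub_C_pow_mul_X_pow a hm hn, zero_mul]

end Substitution

theorem X_pow_sub_C_mul_X_pow_ne_zero {R : Type*} [CommRing R] [Nontrivial R] (t : R) (m : ℕ)
    {n : ℕ} (hn : n ≠ 0) : (X 0 ^ n - C t * X 1 ^ m : MvPowerSeries (Fin 2) R) ≠ 0 := by
  intro h
  have := congrArg (coeff (single 0 n)) h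
  simp [coeff_X_pow, coeff_C_mul, single_eq_single_iff, hn] at this

theorem prime_X_pow_sub_C_pow_mul_X_pow {R : Type*} [CommRing R] [IsDomain R] {a : R}
    (ha : a ≠ 0) {m n : ℕ} (hm : m ≠ 0) (hn : n ≠ 0) (hmn : m.Coprime n) :
    Prime (X 0 ^ n - C (a ^ n) * X 1 ^ m : MvPowerSeries (Fin 2) R) := by
  rw [← Ideal.span_singleton_prime (X_pow_sub_C_mul_X_pow_ne_zero _ m hn),
    ← ker_substAlgHom_monomialCurve ha hm hn hmn]
  exact RingHom.ker_isPrime _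

end MvPowerSeries

/-- For coprime positive integers `m, n` and `t ∈ ℂ`, `t ≠ 0`, the
formal power series `Xⁿ − t·Yᵐ` is irreducible in `ℂ[[X,Y]]`. -/
theorem irreducible_X_pow_sub_smul_Y_pow (m n : ℕ) (hm : 0 < m) (hn : 0 < n)
    (hmn : Nat.Coprime m n) (t : ℂ) (ht : t ≠ 0) :
    Irreducible ((MvPowerSeries.X 0 : MvPowerSeries (Fin 2) ℂ) ^ n -
      (MvPowerSeries.C (σ := Fin 2) (R := ℂ)) t * MvPowerSeries.X 1 ^ m) := by
  obtain ⟨a, rfl⟩ := IsAlgClosed.exists_pow_nat_eq t hn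
  have ha : a ≠ 0 := (pow_ne_zero_iff hn.ne').mp ht
  exact (prime_X_pow_sub_C_pow_mul_X_pow ha hm.ne' hn.ne' hmn).irreducible
end
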